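/- For each k with 2 ≤ k < ω, non(M_{Fin^{⊗k}}) = 𝔢^const_≤(k) and cov(M_{Fin^{⊗k}}) = 𝔳^const_≤(k): the uniformity and covering numbers of the Fin^{⊗k}-Miller null ideal equal the k-constant bounding evasion and prediction numbers. -/

import Mathlib

open Cardinal Filter Set
open scoped ENNReal

noncomputable section

/-- An ideal on a (countable) set `X`, in the sense of the paper: a proper family of
subsets of `X` closed under taking subsets and finite unions and containing all
finite subsets of `X`. -/
structure IsIdealOn {X : Type} (I : Set (Set X)) : Prop where
  subset_mem : ∀ ⦃A B : Set X⦄, A ⊆ B → B ∈ I → A ∈ I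
  union_mem : ∀ ⦃A B : Set X⦄, A ∈ I → B ∈ I → A ∪ B ∈ I
  finite_mem : ∀ ⦃A : Set X⦄, A.Finite → A ∈ I
  proper : (univ : Set X) ∉ I

/-- The finite initial segment `x ↾ n` of `x : X^ω`, as a list (an element of `X^{<ω}`). -/
def seg {X : Type} (x : ℕ → X) (n : ℕ) : List X := (List.range n).map x

/-- The `I`-Miller null ideal `M_I`: the σ-ideal on `X^ω` generated by the sets
`M_φ = {x | ∀^∞ n, x n ∈ φ (x ↾ n)}`, where `φ : X^{<ω} → I`.  (A set is in the
generated σ-ideal iff it is covered by countably many generators.) -/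
def MIdeal {X : Type} (I : Set (Set X)) : Set (Set (ℕ → X)) :=
  {A | ∃ φ : ℕ → List X → Set X, (∀ n s, φ n s ∈ I) ∧
    A ⊆ ⋃ n, {x : ℕ → X | ∀ᶠ m in atTop, x m ∈ φ n (seg x m)}}

/-- The σ-ideal `K_I` on `X^ω` generated by the sets
`K_φ = {x | ∀^∞ n, x n ∈ φ n}`, where `φ : ω → I`. -/
def KIdeal {X : Type} (I : Set (Set X)) : Set (Set (ℕ → X)) :=
  {A | ∃ φ : ℕ → ℕ → Set X, (∀ n m, φ n m ∈ I) ∧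
    A ⊆ ⋃ n, {x : ℕ → X | ∀ᶠ m in atTop, x m ∈ φ n m}}

/-- Additivity `add(J)` of a (σ-)ideal `J`: the least cardinality of a subfamily of `J`
whose union is not in `J`. -/
def addIdeal {Y : Type} (J : Set (Set Y)) : Cardinal :=
  sInf {c | ∃ 𝒜 : Set (Set Y), 𝒜 ⊆ J ∧ ⋃₀ 𝒜 ∉ J ∧ Cardinal.mk 𝒜 = c}

/-- Covering number `cov(J)`: the least cardinality of a subfamily of `J` covering `Y`. -/
def covIdeal {Y : Type} (J : Set (Set Y)) : Cardinal :=
  sInf {c | ∃ 𝒜 : Set (Set Y), 𝒜 ⊆ J ∧ ⋃₀ 𝒜 = Set.univ ∧ Cardinal.mk 𝒜 = c}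

/-- Uniformity `non(J)`: the least cardinality of a subset of `Y` not in `J`. -/
def nonIdeal {Y : Type} (J : Set (Set Y)) : Cardinal :=
  sInf {c | ∃ S : Set Y, S ∉ J ∧ Cardinal.mk S = c}

/-- Cofinality `cof(J)`: the least cardinality of a cofinal (w.r.t. `⊆`) subfamily of `J`. -/
def cofIdeal {Y : Type} (J : Set (Set Y)) : Cardinal :=
  sInf {c | ∃ 𝒜 : Set (Set Y), 𝒜 ⊆ J ∧ (∀ B ∈ J, ∃ A ∈ 𝒜, B ⊆ A) ∧ Cardinal.mk 𝒜 = c}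

/-- `f ≤* g`: eventual domination on `ω^ω`. -/
def LeStar (f g : ℕ → ℕ) : Prop := ∀ᶠ n in atTop, f n ≤ g n

/-- The bounding number `𝔟`. -/
def bNum : Cardinal :=
  sInf {c | ∃ F : Set (ℕ → ℕ), (∀ g : ℕ → ℕ, ∃ f ∈ F, ¬ LeStar f g) ∧ Cardinal.mk F = c}

/-- The dominating number `𝔡`. -/
def dNum : Cardinal :=
  sInf {c | ∃ F : Set (ℕ → ℕ), (∀ f : ℕ → ℕ, ∃ g ∈ F, LeStar f g) ∧ Cardinal.mk F = c}

/-- `A ⊆* B`: almost inclusion (`A \ B` finite). -/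
def AlSub {X : Type} (A B : Set X) : Prop := (A \ B).Finite

/-- The set of cardinalities of witnessing families for `add*_ω(I)`: families `𝒜 ⊆ I`
such that for every countable `B̄ ⊆ I` some `A ∈ 𝒜` satisfies `A ⊄* B` for all `B ∈ B̄`.
`add*_ω(I)` is the minimum of this set (`∞` if it is empty). -/
def addStarOmegaFam {X : Type} (I : Set (Set X)) : Set Cardinal :=
  {c | ∃ 𝒜 : Set (Set X), 𝒜 ⊆ I ∧
    (∀ B : ℕ → Set X, (∀ n, B n ∈ I) → ∃ A ∈ 𝒜, ∀ n, ¬ AlSub A (B n)) ∧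
    Cardinal.mk 𝒜 = c}

/-- The set of cardinalities of witnessing families for `cof*_ω(I)`: families `𝒜` of
countable subsets of `I` such that for every countable `B̄ ⊆ I` there is `Ā ∈ 𝒜` with:
every `B ∈ B̄` satisfies `B ⊆* A` for some `A ∈ Ā`.  `cof*_ω(I)` is the minimum. -/
def cofStarOmegaFam {X : Type} (I : Set (Set X)) : Set Cardinal :=
  {c | ∃ 𝒜 : Set (Set (Set X)), (∀ As ∈ 𝒜, As.Countable ∧ As ⊆ I) ∧
    (∀ B : ℕ → Set X, (∀ n, B n ∈ I) → ∃ As ∈ 𝒜, ∀ n, ∃ A ∈ As, AlSub (B n) A) ∧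
    Cardinal.mk 𝒜 = c}

/-- The set of cardinalities of witnessing families for `non*_ω(I)`: families `𝒜` of
infinite subsets of `X` such that for every countable `B̄ ⊆ I` there is `A ∈ 𝒜` with
`A ∩ B` finite for all `B ∈ B̄`.  `non*_ω(I)` is the minimum of this set. -/
def nonStarOmegaFam {X : Type} (I : Set (Set X)) : Set Cardinal :=
  {c | ∃ 𝒜 : Set (Set X), (∀ A ∈ 𝒜, A.Infinite) ∧
    (∀ B : ℕ → Set X, (∀ n, B n ∈ I) → ∃ A ∈ 𝒜, ∀ n, (A ∩ B n).Finite) ∧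
    Cardinal.mk 𝒜 = c}

/-- The set of cardinalities of witnessing families for `cov*(I)`: families `𝒜 ⊆ I` such
that every infinite `B ⊆ X` has infinite intersection with some member of `𝒜`.
`cov*(I)` is the minimum of this set (`∞` if it is empty, i.e. if `I` is not tall). -/
def covStarFam {X : Type} (I : Set (Set X)) : Set Cardinal :=
  {c | ∃ 𝒜 : Set (Set X), 𝒜 ⊆ I ∧
    (∀ B : Set X, B.Infinite → ∃ A ∈ 𝒜, (A ∩ B).Infinite) ∧ Cardinal.mk 𝒜 = c}

/-- The set of cardinalities of witnessing families for `non*(I)`: families `𝒜` of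
infinite subsets of `X` such that every `B ∈ I` has finite intersection with some
member of `𝒜`.  `non*(I)` is the minimum of this set. -/
def nonStarFam {X : Type} (I : Set (Set X)) : Set Cardinal :=
  {c | ∃ 𝒜 : Set (Set X), (∀ A ∈ 𝒜, A.Infinite) ∧
    (∀ B ∈ I, ∃ A ∈ 𝒜, (A ∩ B).Finite) ∧ Cardinal.mk 𝒜 = c}

/-- The meager ideal of the product space `X^ω`, where `X` carries the discrete
topology (for countable `X` this is a Polish space). -/
def meagerIdeal (X : Type) : Set (Set (ℕ → X)) :=
  letI : TopologicalSpace X := ⊥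
  {A : Set (ℕ → X) | IsMeagre A}

/-- The Fubini product `I ⊗ J` of two ideals. -/
def Fubini {X Y : Type} (I : Set (Set X)) (J : Set (Set Y)) : Set (Set (X × Y)) :=
  {A | {x : X | {y : Y | (x, y) ∈ A} ∉ J} ∈ I}

/-- The ideal `Fin` of finite subsets of `X`. -/
def finIdeal (X : Type) : Set (Set X) := {A : Set X | A.Finite}

/-- The nowhere dense ideal on `2^{<ω}`: `A` belongs to it iff for every `s` there is an
extension `t ⊇ s` none of whose extensions belongs to `A`. -/
def nwdIdeal : Set (Set (List Bool)) :=
  {A | ∀ s : List Bool, ∃ t : List Bool, s <+: t ∧ ∀ u : List Bool, t <+: u → u ∉ A}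

/-- A submeasure: monotone, finitely subadditive, vanishing on `∅`. -/
def IsSubmeasure (φ : Set ℕ → ℝ≥0∞) : Prop :=
  φ ∅ = 0 ∧ (∀ A B : Set ℕ, A ⊆ B → φ A ≤ φ B) ∧ ∀ A B : Set ℕ, φ (A ∪ B) ≤ φ A + φ B

/-- `I` is gradually fragmented: there are a partition `⟨P n⟩` of `ω` into nonempty finite
sets and submeasures `φ n` with `A ∈ I ↔ sup_n φ n (A ∩ P n) < ∞`, together with
`f : ω → ω` such that for all `n, i`, for all but finitely many `j`: any family of at
most `i` subsets of `P j`, each of `φ j`-value `≤ n`, has union of `φ j`-value `≤ f n`. -/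
def GraduallyFragmented (I : Set (Set ℕ)) : Prop :=
  ∃ (P : ℕ → Set ℕ) (φ : ℕ → Set ℕ → ℝ≥0∞) (f : ℕ → ℕ),
    (∀ n, (P n).Finite) ∧ (∀ n, (P n).Nonempty) ∧
    (∀ n m, n ≠ m → Disjoint (P n) (P m)) ∧ (⋃ n, P n) = Set.univ ∧
    (∀ n, IsSubmeasure (φ n)) ∧
    (∀ A : Set ℕ, A ∈ I ↔ (⨆ n, φ n (A ∩ P n)) < ⊤) ∧
    (∀ n i : ℕ, ∀ᶠ j in atTop, ∀ ℬ : Finset (Set ℕ), ℬ.card ≤ i →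
      (∀ B ∈ ℬ, B ⊆ P j) → (∀ B ∈ ℬ, φ j B ≤ (n : ℝ≥0∞)) →
      φ j (⋃ B ∈ ℬ, B) ≤ ((f n : ℕ) : ℝ≥0∞))

/-- The basic clopen cylinder of `2^ω` determined by a finite binary string. -/
def cylSet (s : List Bool) : Set (ℕ → Bool) :=
  {x | ∀ i : Fin s.length, x i.val = s.get i}

/-- `A ⊆ 2^ω` is null for the uniform (coin-flipping) product measure: for every `ε > 0`
it is covered by countably many cylinders of total weight `≤ ε` (the cylinder of a
string `s` has weight `2^{-|s|}`). -/
def IsNullCantor (A : Set (ℕ → Bool)) : Prop :=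
  ∀ ε : ℝ≥0∞, 0 < ε → ∃ s : ℕ → List Bool,
    A ⊆ (⋃ n, cylSet (s n)) ∧ (∑' n : ℕ, (2⁻¹ : ℝ≥0∞) ^ (s n).length) ≤ ε

/-- Coordinatewise addition modulo 2 on `2^ω`. -/
def xorAdd (x y : ℕ → Bool) : ℕ → Bool := fun n => xor (x n) (y n)

/-- The transitive additivity `add_t(𝒩)` of the null ideal of `2^ω`:
`min {|A| : A ⊆ 2^ω ∧ ∃ X ∈ 𝒩, A + X ∉ 𝒩}`. -/
def addTNull : Cardinal :=
  sInf {c | ∃ A : Set (ℕ → Bool),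
    (∃ N : Set (ℕ → Bool), IsNullCantor N ∧ ¬ IsNullCantor (Set.image2 xorAdd A N)) ∧
    Cardinal.mk A = c}

/-- Kada's cardinal invariant `𝔩`: the least `κ` such that for every `g ∈ ω^ω` there is a
family `𝒮`, of size `κ`, of slaloms `S` with `S i ⊆ {0, …, g i}` and `|S i| ≤ i`, such
that every `f ≤* g` satisfies `f ∈* S` for some `S ∈ 𝒮`. -/
def lNum : Cardinal :=
  sInf {c : Cardinal | ∀ g : ℕ → ℕ, ∃ 𝒮 : Set (ℕ → Finset ℕ),
    (∀ S ∈ 𝒮, ∀ i : ℕ, S i ⊆ Finset.range (g i + 1) ∧ (S i).card ≤ i) ∧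
    (∀ f : ℕ → ℕ, LeStar f g → ∃ S ∈ 𝒮, ∀ᶠ i in atTop, f i ∈ S i) ∧
    Cardinal.mk 𝒮 = c}

/-- Membership in `C ⊆ 2^ω` only depends on the first `n` coordinates. -/
def DeterminedBy (C : Set (ℕ → Bool)) (n : ℕ) : Prop :=
  ∀ x y : ℕ → Bool, (∀ i < n, x i = y i) → (x ∈ C ↔ y ∈ C)

/-- Extension of a finite binary string by `false`s. -/
def extendFalse {n : ℕ} (s : Fin n → Bool) : ℕ → Bool :=
  fun i => if h : i < n then s ⟨i, h⟩ else false

/-- `C ⊆ 2^ω` has uniform product measure `1/2`: for some `n`, membership in `C` depends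
only on the first `n` coordinates and exactly half of the `2^n` cylinders of level `n`
are included in `C`. -/
def HalfMeasure (C : Set (ℕ → Bool)) : Prop :=
  ∃ n : ℕ, DeterminedBy C n ∧
    2 * Nat.card {s : Fin n → Bool // extendFalse s ∈ C} = 2 ^ n

/-- Clopenness in the Cantor space `2^ω` (`Bool` discrete, product topology). -/
def IsClopenCantor (C : Set (ℕ → Bool)) : Prop :=
  letI : TopologicalSpace Bool := ⊥
  IsClopen C

/-- Closedness in the Cantor space `2^ω`. -/
def IsClosedCantor (C : Set (ℕ → Bool)) : Prop :=
  letI : TopologicalSpace Bool := ⊥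
  IsClosed C

/-- `Ω`: the (countable) set of clopen subsets of `2^ω` of measure `1/2`. -/
abbrev SoleckiBase : Type := {C : Set (ℕ → Bool) // IsClopenCantor C ∧ HalfMeasure C}

/-- The Solecki ideal `𝒮` on `Ω`: the ideal generated by the sets
`I_y = {C ∈ Ω : y ∈ C}` for `y ∈ 2^ω`. -/
def SoleckiIdeal : Set (Set SoleckiBase) :=
  {A | ∃ F : Finset (ℕ → Bool), A ⊆ ⋃ y ∈ F, {C : SoleckiBase | y ∈ C.val}}

/-- `cov_ω(𝒩)`: the least cardinality of a family of Lebesgue-null sets of reals such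
that every countable set of reals is contained in one of them. -/
def covOmegaNull : Cardinal :=
  sInf {c | ∃ 𝒜 : Set (Set ℝ), (∀ N ∈ 𝒜, MeasureTheory.volume N = 0) ∧
    (∀ B : Set ℝ, B.Countable → ∃ N ∈ 𝒜, B ⊆ N) ∧ Cardinal.mk 𝒜 = c}

/-- `non(𝒩)`: the least cardinality of a non-null set of reals. -/
def nonNullReal : Cardinal :=
  sInf {c | ∃ S : Set ℝ, MeasureTheory.volume S ≠ 0 ∧ Cardinal.mk S = c}

/-- The eventually different ideal `ℰ𝒟` on `ω × ω`. -/
def EDIdeal : Set (Set (ℕ × ℕ)) :=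
  {A | ∃ k : ℕ, ∀ᶠ n in atTop,
    {m : ℕ | (n, m) ∈ A}.Finite ∧ {m : ℕ | (n, m) ∈ A}.ncard ≤ k}

/-- Characteristic function identifying `P(ω)` with `2^ω`. -/
def chiSet (A : Set ℕ) : ℕ → Bool :=
  fun n => @decide (n ∈ A) (Classical.propDecidable _)

/-- `I ⊆ P(ω)` is `F_σ`: under the identification `P(ω) ≅ 2^ω`, `I` is a countable
union of closed subsets of the Cantor space. -/
def IsFSigmaIdeal (I : Set (Set ℕ)) : Prop :=
  ∃ C : ℕ → Set (ℕ → Bool), (∀ n, IsClosedCantor (C n)) ∧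
    ∀ A : Set ℕ, A ∈ I ↔ chiSet A ∈ ⋃ n, C n

/-- The underlying countable set of `Fin^{⊗(n+1)}`: `FinPowType 0 = ω`,
`FinPowType (n+1) = ω × FinPowType n`. -/
def FinPowType : ℕ → Type
  | 0 => ℕ
  | n + 1 => ℕ × FinPowType n

/-- The iterated Fubini power of `Fin`: `FinPowIdeal 0 = Fin`, and
`FinPowIdeal (n+1) = Fin ⊗ FinPowIdeal n`; thus `Fin^{⊗k} = FinPowIdeal (k-1)`. -/
def FinPowIdeal : (n : ℕ) → Set (Set (FinPowType n))
  | 0 => finIdeal ℕ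
  | n + 1 => Fubini (finIdeal ℕ) (FinPowIdeal n)

/-- `π` `k`-constantly bounding-predicts `f`: for all but finitely many `i` there is
`j ∈ [i, i + k)` with `f j ≤ π (f ↾ j)`. -/
def ConstBddPred (k : ℕ) (π : List ℕ → ℕ) (f : ℕ → ℕ) : Prop :=
  ∀ᶠ i in atTop, ∃ j : ℕ, i ≤ j ∧ j < i + k ∧ f j ≤ π (seg f j)

/-- The constant bounding evasion number `𝔢^const_≤(k)`. -/
def eConstLe (k : ℕ) : Cardinal :=
  sInf {c | ∃ F : Set (ℕ → ℕ),
    (∀ π : List ℕ → ℕ, ∃ f ∈ F, ¬ ConstBddPred k π f) ∧ Cardinal.mk F = c}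

/-- The constant bounding prediction number `𝔳^const_≤(k)`. -/
def vConstLe (k : ℕ) : Cardinal :=
  sInf {c | ∃ Ps : Set (List ℕ → ℕ),
    (∀ f : ℕ → ℕ, ∃ π ∈ Ps, ConstBddPred k π f) ∧ Cardinal.mk Ps = c}

/-- The asymptotic density zero ideal `𝒵` on `ω`. -/
def densityZero : Set (Set ℕ) :=
  {A : Set ℕ | Tendsto (fun n : ℕ => ((A ∩ Iio n).ncard : ℝ) / (n : ℝ)) atTop (nhds (0 : ℝ))}

/-- The σ-ideal `ℰ` on `2^ω` generated by the closed null sets. -/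
def EIdeal : Set (Set (ℕ → Bool)) :=
  {A | ∃ C : ℕ → Set (ℕ → Bool),
    (∀ n, IsClosedCantor (C n) ∧ IsNullCantor (C n)) ∧ A ⊆ ⋃ n, C n}

/-! Write `FinPowType K ≅ ℕ^{K+1}` and cut `f ∈ ω^ω` into consecutive blocks of length `K + 1`,
so that `ω^ω ≅ (ℕ^{K+1})^ω`. Every `B ∈ Fin^{⊗(K+1)}` is contained in a set
`{t | ∃ r ≤ K, t r ≤ β (t ↾ r)}`, and all such sets belong to `Fin^{⊗(K+1)}`. Moreover, as the
ideal is closed under finite unions, countably many generators `M_φ` of the Miller ideal are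
covered by a single one. Hence `x ∈ M_φ` says, up to enlarging `φ`, that on almost every block
some entry is bounded by a function of everything before it: `M_{Fin^{⊗(K+1)}}` is bounding
prediction along the aligned blocks. A `(K+1)`-constant prediction of `f` predicts almost all
aligned blocks; conversely, predicting the aligned blocks of each of the `K + 1` shifts of `f`
yields a prediction in every window of length `K + 1`. So non-null sets and evading families,
and covers and predicting families, translate into each other up to a factor `K + 1` or a power
`K + 1` of the size, which is harmless since all these families are infinite. -/

section Seg

variable {X : Type}

@[simp]
lemma seg_length (x : ℕ → X) (n : ℕ) : (seg x n).length = n := by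
  simp [seg]

lemma seg_congr {x y : ℕ → X} {n : ℕ} (h : ∀ i < n, x i = y i) : seg x n = seg y n :=
  List.map_congr_left fun i hi => h i (List.mem_range.1 hi)

lemma seg_add (x : ℕ → X) (a b : ℕ) :
    seg x (a + b) = seg x a ++ seg (fun i => x (a + i)) b := by
  simp [seg, List.range_add]

lemma drop_seg (x : ℕ → X) (a b : ℕ) : (seg x (a + b)).drop a = seg (fun i => x (a + i)) b := by
  rw [seg_add, List.drop_left' (seg_length x a)]

lemma seg_succ_eq_cons (x : ℕ → X) (n : ℕ) :
    seg x (n + 1) = x 0 :: seg (fun i => x (i + 1)) n := by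
  simp [seg, List.range_succ_eq_map]

lemma getD_seg (x : ℕ → X) {i n : ℕ} (h : i < n) (d : X) : (seg x n).getD i d = x i := by
  simp [seg, h]

lemma exists_forall_eq_step_seg (step : List X → X) : ∃ x : ℕ → X, ∀ m, x m = step (seg x m) := by
  let L : ℕ → List X := fun m => Nat.rec [] (fun _ l => l ++ [step l]) m
  refine ⟨fun m => step (L m), fun m => congrArg step ?_⟩
  induction m with
  | zero => rfl
  | succ m ih => rw [seg, List.range_succ, List.map_append, ← seg, ← ih]; rfl

end Seg

namespace IsIdealOn

variable {X : Type} {I : Set (Set X)}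

lemma empty_mem (hI : IsIdealOn I) : ∅ ∈ I :=
  hI.finite_mem finite_empty

lemma ne_univ (hI : IsIdealOn I) {B : Set X} (hB : B ∈ I) : B ≠ Set.univ :=
  fun h => hI.proper (h ▸ hB)

lemma biUnion_mem (hI : IsIdealOn I) {ι : Type*} (t : Finset ι) {g : ι → Set X}
    (hg : ∀ i ∈ t, g i ∈ I) : ⋃ i ∈ t, g i ∈ I := by
  classical
  induction t using Finset.induction_on with
  | empty => simpa using hI.empty_mem
  | insert i t _ ih =>
    rw [Finset.set_biUnion_insert]
    exact hI.union_mem (hg i (by simp)) (ih fun j hj => hg j (by simp [hj]))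

lemma fubini {Y : Type} {J : Set (Set Y)} (hI : IsIdealOn I) (hJ : IsIdealOn J) :
    IsIdealOn (Fubini I J) where
  subset_mem A B hAB hB :=
    hI.subset_mem (fun x hx hBx => hx (hJ.subset_mem (fun _ hy => hAB hy) hBx)) hB
  union_mem A B hA hB := by
    refine hI.subset_mem (fun x hx => ?_) (hI.union_mem hA hB)
    by_contra h
    simp only [mem_union, mem_ofPred_eq, not_or, not_not] at h
    exact hx (hJ.union_mem h.1 h.2)
  finite_mem A hA := by
    refine hI.subset_mem (fun x hx => hx (hJ.finite_mem ?_)) hI.empty_mem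
    exact hA.preimage (Prod.mk_right_injective x).injOn
  proper h := hI.proper (by simpa [Fubini, hJ.proper] using h)

end IsIdealOn

lemma isIdealOn_finIdeal (X : Type) [Infinite X] : IsIdealOn (finIdeal X) where
  subset_mem _ _ hAB hB := hB.subset hAB
  union_mem _ _ hA hB := hA.union hB
  finite_mem _ hA := hA
  proper := infinite_univ

lemma isIdealOn_finPowIdeal : ∀ n, IsIdealOn (FinPowIdeal n)
  | 0 => isIdealOn_finIdeal ℕ
  | n + 1 => (isIdealOn_finIdeal ℕ).fubini (isIdealOn_finPowIdeal n)

section Miller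

variable {X : Type} {I : Set (Set X)}

def millerSet (ψ : List X → Set X) : Set (ℕ → X) :=
  {x | ∀ᶠ m in atTop, x m ∈ ψ (seg x m)}

lemma mem_MIdeal_of_subset_millerSet {ψ : List X → Set X} (hψ : ∀ s, ψ s ∈ I)
    {A : Set (ℕ → X)} (hA : A ⊆ millerSet ψ) : A ∈ MIdeal I :=
  ⟨fun _ => ψ, fun _ => hψ, hA.trans (subset_iUnion (fun _ : ℕ => millerSet ψ) 0)⟩

lemma iUnion_millerSet_subset (φ : ℕ → List X → Set X) :
    ⋃ n, millerSet (φ n) ⊆ millerSet fun s => ⋃ n ∈ Finset.range (s.length + 1), φ n s := by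
  intro x hx
  obtain ⟨n, hn⟩ := mem_iUnion.1 hx
  filter_upwards [hn, eventually_ge_atTop n] with m hm hnm
  exact mem_biUnion (Finset.mem_range.2 (by simpa using Nat.lt_succ_of_le hnm)) hm

lemma mem_MIdeal_iff (hI : IsIdealOn I) {A : Set (ℕ → X)} :
    A ∈ MIdeal I ↔ ∃ ψ : List X → Set X, (∀ s, ψ s ∈ I) ∧ A ⊆ millerSet ψ := by
  refine ⟨fun ⟨φ, hφ, hA⟩ => ⟨_, fun s => ?_, hA.trans (iUnion_millerSet_subset φ)⟩,
    fun ⟨ψ, hψ, hA⟩ => mem_MIdeal_of_subset_millerSet hψ hA⟩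
  exact hI.biUnion_mem _ fun n _ => hφ n s

lemma univ_notMem_MIdeal (hI : IsIdealOn I) : (Set.univ : Set (ℕ → X)) ∉ MIdeal I := by
  rw [mem_MIdeal_iff hI]
  rintro ⟨ψ, hψ, hU⟩
  have hout : ∀ s, ∃ a, a ∉ ψ s := fun s => (ne_univ_iff_exists_notMem _).1 (hI.ne_univ (hψ s))
  choose step hstep using hout
  obtain ⟨x, hx⟩ := exists_forall_eq_step_seg step
  obtain ⟨m, hm⟩ := (hU (mem_univ x)).exists
  exact hstep _ (hx m ▸ hm)

lemma sUnion_mem_MIdeal (hI : IsIdealOn I) {𝒜 : Set (Set (ℕ → X))} (hc : 𝒜.Countable)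
    (h𝒜 : 𝒜 ⊆ MIdeal I) : ⋃₀ 𝒜 ∈ MIdeal I := by
  rcases 𝒜.eq_empty_or_nonempty with rfl | hne
  · exact ⟨fun _ _ => ∅, fun _ _ => hI.empty_mem, by simp⟩
  obtain ⟨A, rfl⟩ := hc.exists_eq_range hne
  choose ψ hψ hA using fun n => (mem_MIdeal_iff hI).1 (h𝒜 (mem_range_self n))
  exact ⟨ψ, hψ, sUnion_range A ▸ iUnion_mono hA⟩

lemma aleph0_lt_mk_of_sUnion_eq_univ (hI : IsIdealOn I) {𝒜 : Set (Set (ℕ → X))}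
    (h𝒜 : 𝒜 ⊆ MIdeal I) (hU : ⋃₀ 𝒜 = Set.univ) : ℵ₀ < #𝒜 :=
  not_le.1 fun h =>
    univ_notMem_MIdeal hI (hU ▸ sUnion_mem_MIdeal hI (le_aleph0_iff_set_countable.1 h) h𝒜)

end Miller

namespace FinPowType

/-- The coordinates of `t : FinPowType n ≅ ℕ^{n+1}`, indexed by `0, …, n`. -/
def coord : (n : ℕ) → FinPowType n → ℕ → ℕ
  | 0, t, _ => t
  | _ + 1, t, 0 => t.1
  | n + 1, t, r + 1 => coord n t.2 r

def ofFun : (n : ℕ) → (ℕ → ℕ) → FinPowType n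
  | 0, g => g 0
  | n + 1, g => (g 0, ofFun n fun r => g (r + 1))

lemma coord_ofFun : ∀ (n : ℕ) (g : ℕ → ℕ) {r : ℕ}, r ≤ n → coord n (ofFun n g) r = g r
  | 0, _, 0, _ => rfl
  | _ + 1, _, 0, _ => rfl
  | n + 1, g, r + 1, hr => coord_ofFun n (fun r => g (r + 1)) (by omega)

lemma ofFun_congr : ∀ (n : ℕ) {g g' : ℕ → ℕ}, (∀ r ≤ n, g r = g' r) → ofFun n g = ofFun n g'
  | 0, _, _, h => h 0 le_rfl
  | n + 1, _, _, h =>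
    Prod.ext (h 0 (by omega)) (ofFun_congr n fun r hr => h (r + 1) (by omega))

lemma ofFun_coord : ∀ (n : ℕ) (t : FinPowType n), ofFun n (coord n t) = t
  | 0, _ => rfl
  | n + 1, t => Prod.ext rfl (ofFun_coord n t.2)

end FinPowType

open FinPowType

def captureSet (n : ℕ) (β : List ℕ → ℕ) : Set (FinPowType n) :=
  {t | ∃ r ≤ n, coord n t r ≤ β (seg (coord n t) r)}

/-- Given the first `r` coordinates of a tuple, a bound on the next one beyond which the tuple
leaves `B`. Junk unless `B ∈ Fin^{⊗(n+1)}`, which makes the sets under `sSup` finite. -/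
def avoidBound : (n : ℕ) → Set (FinPowType n) → List ℕ → ℕ
  | 0, B, _ => sSup (B : Set ℕ)
  | n + 1, B, [] => sSup {a | Prod.mk a ⁻¹' B ∉ FinPowIdeal n}
  | n + 1, B, a :: l => avoidBound n (Prod.mk a ⁻¹' B) l

lemma captureSet_mem_finPowIdeal : ∀ (n : ℕ) (β : List ℕ → ℕ), captureSet n β ∈ FinPowIdeal n
  | 0, β => (finite_Iic (β [])).subset fun t ⟨r, hr, ht⟩ => by
      obtain rfl : r = 0 := by omega
      exact ht
  | n + 1, β => by
    refine (finite_Iic (β [])).subset fun a ha => ?_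
    by_contra hgt
    refine ha ((isIdealOn_finPowIdeal n).subset_mem ?_
      (captureSet_mem_finPowIdeal n fun l => β (a :: l)))
    rintro u ⟨_ | r, hr, hle⟩
    · exact absurd hle hgt
    · exact ⟨r, by omega, by rwa [seg_succ_eq_cons] at hle⟩

lemma subset_captureSet_avoidBound : ∀ (n : ℕ) {B : Set (FinPowType n)}, B ∈ FinPowIdeal n →
    B ⊆ captureSet n (avoidBound n B)
  | 0, B, hB => fun t ht => ⟨0, le_rfl, le_csSup (Set.Finite.bddAbove (α := ℕ) hB) ht⟩
  | n + 1, B, hB => by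
    rintro ⟨a, u⟩ ht
    by_cases ha : a ≤ avoidBound (n + 1) B []
    · exact ⟨0, by omega, ha⟩
    have hsec : Prod.mk a ⁻¹' B ∈ FinPowIdeal n := by
      by_contra h
      exact ha (le_csSup (Set.Finite.bddAbove hB) h)
    obtain ⟨r, hr, hle⟩ := subset_captureSet_avoidBound n hsec ht
    exact ⟨r + 1, by omega, by rwa [seg_succ_eq_cons]⟩

section Blocks

variable {K : ℕ}

def unflat (K : ℕ) (g : ℕ → ℕ) : ℕ → FinPowType K :=
  fun m => ofFun K fun r => g ((K + 1) * m + r)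

def flat (K : ℕ) (x : ℕ → FinPowType K) : ℕ → ℕ :=
  fun j => coord K (x (j / (K + 1))) (j % (K + 1))

lemma unflat_flat (x : ℕ → FinPowType K) : unflat K (flat K x) = x := by
  funext m
  refine ((ofFun_congr K fun r hr => ?_).trans (ofFun_coord K (x m)))
  have hr' : r < K + 1 := by omega
  simp only [flat, Nat.mul_add_div (Nat.succ_pos K), Nat.div_eq_of_lt hr', add_zero,
    Nat.mul_add_mod, Nat.mod_eq_of_lt hr']

lemma coord_unflat (g : ℕ → ℕ) (m : ℕ) {r : ℕ} (hr : r ≤ K) :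
    coord K (unflat K g m) r = g ((K + 1) * m + r) :=
  coord_ofFun K _ hr

lemma seg_coord_unflat (g : ℕ → ℕ) (m : ℕ) {r : ℕ} (hr : r ≤ K + 1) :
    seg (coord K (unflat K g m)) r = seg (fun i => g ((K + 1) * m + i)) r :=
  seg_congr fun _ hi => coord_unflat g m (by omega)

def flatList (K : ℕ) (s : List (FinPowType K)) : List ℕ :=
  s.flatMap fun t => seg (coord K t) (K + 1)

lemma flatList_seg_unflat (g : ℕ → ℕ) (m : ℕ) :
    flatList K (seg (unflat K g) m) = seg g ((K + 1) * m) := by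
  induction m with
  | zero => rfl
  | succ m ih =>
    rw [seg, List.range_succ, List.map_append, ← seg, flatList, List.flatMap_append, ← flatList,
      ih, Nat.mul_succ, seg_add]
    simp [seg_coord_unflat g m le_rfl]

def capturePhi (π : List ℕ → ℕ) (s : List (FinPowType K)) : Set (FinPowType K) :=
  captureSet K fun l => π (flatList K s ++ l)

lemma unflat_mem_capturePhi_iff (π : List ℕ → ℕ) (g : ℕ → ℕ) (m : ℕ) :
    unflat K g m ∈ capturePhi π (seg (unflat K g) m) ↔
      ∃ r ≤ K, g ((K + 1) * m + r) ≤ π (seg g ((K + 1) * m + r)) := by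
  refine exists_congr fun r => and_congr_right fun hr => ?_
  rw [coord_unflat g m hr, seg_coord_unflat g m (by omega), flatList_seg_unflat,
    seg_add g ((K + 1) * m) r]

def boundPred (ψ : List (FinPowType K) → Set (FinPowType K)) (s : List ℕ) : ℕ :=
  avoidBound K (ψ (seg (unflat K fun i => s.getD i 0) (s.length / (K + 1))))
    (s.drop ((K + 1) * (s.length / (K + 1))))

lemma boundPred_seg (ψ : List (FinPowType K) → Set (FinPowType K)) (g : ℕ → ℕ) (m : ℕ)
    {r : ℕ} (hr : r ≤ K) :
    boundPred ψ (seg g ((K + 1) * m + r)) =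
      avoidBound K (ψ (seg (unflat K g) m)) (seg (coord K (unflat K g m)) r) := by
  have hm : ((K + 1) * m + r) / (K + 1) = m := by
    rw [Nat.mul_add_div (Nat.succ_pos K), Nat.div_eq_of_lt (by omega), add_zero]
  have hblocks : seg (unflat K fun i => (seg g ((K + 1) * m + r)).getD i 0) m =
      seg (unflat K g) m := by
    refine seg_congr fun m' hm' => ofFun_congr K fun r' hr' => getD_seg g ?_ 0
    nlinarith
  rw [boundPred, seg_length, hm, hblocks, drop_seg, seg_coord_unflat g m (by omega)]

lemma exists_le_boundPred {ψ : List (FinPowType K) → Set (FinPowType K)} {g : ℕ → ℕ} {m : ℕ}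
    (hψ : ψ (seg (unflat K g) m) ∈ FinPowIdeal K) (h : unflat K g m ∈ ψ (seg (unflat K g) m)) :
    ∃ r ≤ K, g ((K + 1) * m + r) ≤ boundPred ψ (seg g ((K + 1) * m + r)) := by
  obtain ⟨r, hr, hle⟩ := subset_captureSet_avoidBound K hψ h
  refine ⟨r, hr, ?_⟩
  rwa [boundPred_seg ψ g m hr, ← coord_unflat g m hr]

end Blocks

section Prediction

variable {K : ℕ}

lemma ConstBddPred.eventually_block {π : List ℕ → ℕ} {f : ℕ → ℕ}
    (h : ConstBddPred (K + 1) π f) :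
    ∀ᶠ m in atTop, ∃ r ≤ K, f ((K + 1) * m + r) ≤ π (seg f ((K + 1) * m + r)) := by
  obtain ⟨N, hN⟩ := eventually_atTop.1 h
  filter_upwards [eventually_ge_atTop N] with m hm
  obtain ⟨j, hij, hj, hle⟩ := hN ((K + 1) * m) (by nlinarith)
  exact ⟨j - (K + 1) * m, by omega, by rwa [Nat.add_sub_cancel' hij]⟩

lemma constBddPred_of_eventually_blocks {π : List ℕ → ℕ} {f : ℕ → ℕ}
    (h : ∀ᶠ m in atTop, ∀ d : Fin (K + 1),
      ∃ r ≤ K, f (d + ((K + 1) * m + r)) ≤ π (seg f (d + ((K + 1) * m + r)))) :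
    ConstBddPred (K + 1) π f := by
  obtain ⟨M, hM⟩ := eventually_atTop.1 h
  filter_upwards [eventually_ge_atTop ((K + 1) * M)] with i hi
  have hdiv := Nat.div_add_mod i (K + 1)
  have hMi : M ≤ i / (K + 1) := (Nat.le_div_iff_mul_le (Nat.succ_pos K)).2 (by linarith)
  obtain ⟨r, hr, hle⟩ := hM _ hMi ⟨i % (K + 1), Nat.mod_lt i (Nat.succ_pos K)⟩
  rw [Fin.val_mk, ← add_assoc, add_comm (i % (K + 1)), hdiv] at hle
  exact ⟨i + r, by omega, by omega, hle⟩

def shiftPredictor (ψ : Fin (K + 1) → List (FinPowType K) → Set (FinPowType K))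
    (s : List ℕ) : ℕ :=
  Finset.univ.sup fun d => boundPred (ψ d) (s.drop d)

lemma unflat_mem_millerSet_capturePhi {π : List ℕ → ℕ} {g : ℕ → ℕ}
    (h : ConstBddPred (K + 1) π g) : unflat K g ∈ millerSet (capturePhi π) := by
  filter_upwards [h.eventually_block] with m hm
  exact (unflat_mem_capturePhi_iff π g m).2 hm

lemma constBddPred_shiftPredictor {ψ : Fin (K + 1) → List (FinPowType K) → Set (FinPowType K)}
    (hψ : ∀ d s, ψ d s ∈ FinPowIdeal K) {f : ℕ → ℕ}
    (h : ∀ d : Fin (K + 1), unflat K (fun j => f (d + j)) ∈ millerSet (ψ d)) :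
    ConstBddPred (K + 1) (shiftPredictor ψ) f := by
  refine constBddPred_of_eventually_blocks ?_
  filter_upwards [eventually_all.2 h] with m hm d
  obtain ⟨r, hr, hle⟩ := exists_le_boundPred (hψ _ _) (hm d)
  refine ⟨r, hr, hle.trans ?_⟩
  rw [← drop_seg]
  exact Finset.le_sup (f := fun d' : Fin (K + 1) => boundPred (ψ d') ((seg f _).drop d'))
    (Finset.mem_univ d)

end Prediction

section Transfer

variable {K : ℕ}

lemma aleph0_le_mk_of_evading {F : Set (ℕ → ℕ)}
    (hF : ∀ π, ∃ f ∈ F, ¬ ConstBddPred (K + 1) π f) : ℵ₀ ≤ #F := by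
  by_contra hlt
  have hfin : F.Finite := lt_aleph0_iff_set_finite.1 (not_le.1 hlt)
  obtain ⟨f, hf, hnot⟩ := hF fun s => hfin.toFinset.sup fun g => g s.length
  refine hnot (Eventually.of_forall fun i => ⟨i, le_rfl, by omega, ?_⟩)
  simpa using Finset.le_sup (f := fun g => g i) (hfin.mem_toFinset.2 hf)

lemma exists_evading_image_flat {S : Set (ℕ → FinPowType K)}
    (hS : S ∉ MIdeal (FinPowIdeal K)) (π : List ℕ → ℕ) :
    ∃ f ∈ flat K '' S, ¬ ConstBddPred (K + 1) π f := by
  obtain ⟨x, hxS, hx⟩ := not_subset.1 fun hsub =>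
    hS (mem_MIdeal_of_subset_millerSet (fun _ => captureSet_mem_finPowIdeal K _) hsub)
  exact ⟨flat K x, mem_image_of_mem _ hxS,
    fun h => hx (unflat_flat x ▸ unflat_mem_millerSet_capturePhi h)⟩

lemma exists_notMem_MIdeal_of_evading {F : Set (ℕ → ℕ)}
    (hF : ∀ π, ∃ f ∈ F, ¬ ConstBddPred (K + 1) π f) :
    ∃ S ∉ MIdeal (FinPowIdeal K), #S ≤ #F := by
  refine ⟨range fun p : Fin (K + 1) × F => unflat K fun j => p.2.1 (p.1 + j), fun hS => ?_,
    mk_range_le.trans ?_⟩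
  · obtain ⟨ψ, hψ, hsub⟩ := (mem_MIdeal_iff (isIdealOn_finPowIdeal K)).1 hS
    obtain ⟨f, hf, hnot⟩ := hF (shiftPredictor fun _ => ψ)
    exact hnot (constBddPred_shiftPredictor (fun _ => hψ) fun d => hsub ⟨(d, ⟨f, hf⟩), rfl⟩)
  · have hF' := aleph0_le_mk_of_evading hF
    rw [mk_prod, mk_fin, lift_id, lift_id]
    exact mul_le_of_le hF' (natCast_lt_aleph0.le.trans hF') le_rfl

lemma exists_cover_of_predicting {Ps : Set (List ℕ → ℕ)}
    (hPs : ∀ f, ∃ π ∈ Ps, ConstBddPred (K + 1) π f) :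
    ∃ 𝒜 ⊆ MIdeal (FinPowIdeal K), ⋃₀ 𝒜 = Set.univ ∧ #𝒜 ≤ #Ps := by
  refine ⟨(fun π => millerSet (capturePhi π)) '' Ps, ?_, eq_univ_of_forall fun x => ?_,
    mk_image_le⟩
  · rintro _ ⟨π, -, rfl⟩
    exact mem_MIdeal_of_subset_millerSet (fun _ => captureSet_mem_finPowIdeal K _) subset_rfl
  · obtain ⟨π, hπ, hpred⟩ := hPs (flat K x)
    exact ⟨_, mem_image_of_mem _ hπ, unflat_flat x ▸ unflat_mem_millerSet_capturePhi hpred⟩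

lemma exists_predicting_of_cover {𝒜 : Set (Set (ℕ → FinPowType K))}
    (h𝒜 : 𝒜 ⊆ MIdeal (FinPowIdeal K)) (hU : ⋃₀ 𝒜 = Set.univ) :
    ∃ Ps : Set (List ℕ → ℕ), (∀ f, ∃ π ∈ Ps, ConstBddPred (K + 1) π f) ∧ #Ps ≤ #𝒜 := by
  choose ψ hψ hsub using fun A : 𝒜 => (mem_MIdeal_iff (isIdealOn_finPowIdeal K)).1 (h𝒜 A.2)
  refine ⟨range fun T : Fin (K + 1) → 𝒜 => shiftPredictor fun d => ψ (T d), fun f => ?_,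
    mk_range_le.trans ?_⟩
  · have hcov (d : Fin (K + 1)) : ∃ A : 𝒜, unflat K (fun j => f (d + j)) ∈ (A : Set _) := by
      obtain ⟨A, hA, hx⟩ := hU.symm ▸ mem_univ (unflat K fun j => f (d + j))
      exact ⟨⟨A, hA⟩, hx⟩
    choose T hT using hcov
    exact ⟨_, mem_range_self T,
      constBddPred_shiftPredictor (fun d => hψ (T d)) fun d => hsub _ (hT d)⟩
  · rw [← power_def, mk_fin]
    exact power_nat_le (aleph0_lt_mk_of_sUnion_eq_univ (isIdealOn_finPowIdeal K) h𝒜 hU).le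

theorem nonIdeal_MIdeal_finPowIdeal (K : ℕ) :
    nonIdeal (MIdeal (FinPowIdeal K)) = eConstLe (K + 1) := by
  refine csInf_eq_csInf_of_forall_exists_le ?_ ?_
  · rintro _ ⟨S, hS, rfl⟩
    exact ⟨_, ⟨flat K '' S, exists_evading_image_flat hS, rfl⟩, mk_image_le⟩
  · rintro _ ⟨F, hF, rfl⟩
    obtain ⟨S, hS, hcard⟩ := exists_notMem_MIdeal_of_evading hF
    exact ⟨_, ⟨S, hS, rfl⟩, hcard⟩

theorem covIdeal_MIdeal_finPowIdeal (K : ℕ) :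
    covIdeal (MIdeal (FinPowIdeal K)) = vConstLe (K + 1) := by
  refine csInf_eq_csInf_of_forall_exists_le ?_ ?_
  · rintro _ ⟨𝒜, h𝒜, hU, rfl⟩
    obtain ⟨Ps, hPs, hcard⟩ := exists_predicting_of_cover h𝒜 hU
    exact ⟨_, ⟨Ps, hPs, rfl⟩, hcard⟩
  · rintro _ ⟨Ps, hPs, rfl⟩
    obtain ⟨𝒜, h𝒜, hU, hcard⟩ := exists_cover_of_predicting hPs
    exact ⟨_, ⟨𝒜, h𝒜, hU, rfl⟩, hcard⟩

end Transfer

/-- For `2 ≤ k < ω`: `non(M_{Fin^{⊗k}}) = 𝔢^const_≤(k)` and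
`cov(M_{Fin^{⊗k}}) = 𝔳^const_≤(k)`  (recall `Fin^{⊗k} = FinPowIdeal (k-1)`). -/
theorem stmt15 (k : ℕ) (hk : 2 ≤ k) :
    nonIdeal (MIdeal (FinPowIdeal (k - 1))) = eConstLe k ∧
    covIdeal (MIdeal (FinPowIdeal (k - 1))) = vConstLe k := by
  obtain ⟨K, rfl⟩ : ∃ K, k = K + 1 := ⟨k - 1, by omega⟩
  exact ⟨nonIdeal_MIdeal_finPowIdeal K, covIdeal_MIdeal_finPowIdeal K⟩
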